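/- arXiv:1901.07647 — 4 statements merged into one kernel-verified Lean document; each statement's English description precedes it below -/
import Mathlib

section
/- Let m′, m, q′, q, r be positive integers with r ≤ m′. Let Φ, Φ̃ ∈ ℝ^{m′×m} be pooling/unpooling matrices and let ψ_{j,k}, ψ̃_{k,j} ∈ ℝʳ (j ∈ [q], k ∈ [q′]) be filters. Let E ∈ ℝ^{m′q′×mq} be the block matrix whose (k,j) block is Φ ⊛ ψ_{j,k}, let D ∈ ℝ^{m′q′×mq} be the block matrix whose (k,j) block is Φ̃ ⊛ ψ̃_{k,j}, and let Ψ, Ψ̃ ∈ ℝ^{rq′×q} be the block matrices whose (k,j) blocks are the columns ψ_{j,k} and ψ̃_{k,j} respectively. If Φ̃Φᵀ = α I_{m′} for some α > 0 and ΨΨ̃ᵀ = (1/(rα)) I_{rq′}, then D Eᵀ = I_{m′q′}. -/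
open Matrix

/-- Circular convolution on `ℝ^n`, indexed by `ZMod n`:
`(x ⊛ ψ)[k] = Σ_j x[j] ψ[k − j]`. -/
def cconv {n : ℕ} [NeZero n] (x ψ : ZMod n → ℝ) : ZMod n → ℝ :=
  fun k => ∑ j : ZMod n, x j * ψ (k - j)

/-- Zero-padding of a filter `ψ ∈ ℝ^r` to a vector in `ℝ^n`. -/
def pad {n r : ℕ} [NeZero n] (ψ : Fin r → ℝ) : ZMod n → ℝ :=
  fun k => ∑ j : Fin r, if ((j : ℕ) : ZMod n) = k then ψ j else 0

/-- `Φ ⊛ ψ`: column-wise circular convolution of a matrix with a filter: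
`Φ ⊛ ψ = [φ₁ ⊛ ψ, …, φ_m ⊛ ψ]`. -/
def matConv {n : ℕ} [NeZero n] {m : Type*} (Φ : Matrix (ZMod n) m ℝ) (ψ : ZMod n → ℝ) :
    Matrix (ZMod n) m ℝ :=
  fun i j => cconv (fun a => Φ a j) ψ i

/-- Convolution with a zero-padded filter, explicitly. -/
lemma conv_pad {n r : ℕ} [NeZero n] {m : Type*} (Φ : Matrix (ZMod n) m ℝ)
    (ψ : Fin r → ℝ) (i : ZMod n) (c : m) :
    matConv Φ (pad ψ) i c = ∑ b : Fin r, Φ (i - ((b : ℕ) : ZMod n)) c * ψ b := by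
  unfold matConv cconv pad
  simp only [Finset.mul_sum]
  rw [Finset.sum_comm]
  refine Finset.sum_congr rfl fun b _ => ?_
  have h : ∀ a : ZMod n, (Φ a c * if ((b : ℕ) : ZMod n) = i - a then ψ b else 0)
      = if a = i - ((b : ℕ) : ZMod n) then Φ (i - ((b : ℕ) : ZMod n)) c * ψ b else 0 := by
    intro a
    by_cases h : a = i - ((b : ℕ) : ZMod n)
    · subst h; simp [sub_sub_cancel]
    · rw [if_neg h, if_neg, mul_zero]
      intro hh; exact h (by rw [hh, sub_sub_cancel])
  simp only [h]
  simp [Finset.sum_ite_eq']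

/-- Rearranging a quadruple sum of products. -/
lemma quad {ι κ β γ : Type*} [Fintype ι] [Fintype κ] [Fintype β] [Fintype γ]
    (f : β → ι → ℝ) (g : γ → ι → ℝ) (u : β → κ → ℝ) (v : γ → κ → ℝ) :
    ∑ j : κ, ∑ c : ι, (∑ b : β, f b c * u b j) * (∑ b' : γ, g b' c * v b' j)
      = ∑ b : β, ∑ b' : γ, (∑ j : κ, u b j * v b' j) * (∑ c : ι, f b c * g b' c) := by
  simp only [Finset.sum_mul_sum, Finset.mul_sum, Finset.sum_mul]
  have key := Fintype.sum_equiv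
    (⟨fun p => (p.2.2.2, p.2.2.1, p.2.1, p.1), fun p => (p.2.2.2, p.2.2.1, p.2.1, p.1),
      fun p => rfl, fun p => rfl⟩ : (κ × ι × γ × β) ≃ (β × γ × ι × κ))
    (fun p : κ × ι × γ × β => f p.2.2.2 p.2.1 * u p.2.2.2 p.1 * (g p.2.2.1 p.2.1 * v p.2.2.1 p.1))
    (fun p : β × γ × ι × κ => u p.1 p.2.2.2 * v p.2.1 p.2.2.2 * (f p.1 p.2.2.1 * g p.2.1 p.2.2.1))
    (fun p => by simp only [Equiv.coe_fn_mk]; ring)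
  simpa [Fintype.sum_prod_type] using key

/-- Single-layer perfect reconstruction: if the pooling/unpooling pair
satisfies `Φ̃Φᵀ = α I_{m′}` (`α > 0`) and the filter matrices satisfy
`ΨΨ̃ᵀ = (1/(rα)) I_{rq′}`, then the encoder/decoder pair satisfies `D Eᵀ = I_{m′q′}`,
where `E` has `(k,j)` block `Φ ⊛ ψ_{j,k}` and `D` has `(k,j)` block `Φ̃ ⊛ ψ̃_{k,j}`. -/
theorem stmt_7 {m' m q' q r : ℕ} [NeZero m'] [NeZero m]
    (hq' : 0 < q') (hq : 0 < q) (hr : 0 < r) (hrm : r ≤ m')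
    (Φ Φt : Matrix (ZMod m') (ZMod m) ℝ)
    (ψ : Fin q → Fin q' → Fin r → ℝ) (ψt : Fin q' → Fin q → Fin r → ℝ)
    (E D : Matrix (Fin q' × ZMod m') (Fin q × ZMod m) ℝ)
    (hE : ∀ k j i c, E (k, i) (j, c) = matConv Φ (pad (ψ j k)) i c)
    (hD : ∀ k j i c, D (k, i) (j, c) = matConv Φt (pad (ψt k j)) i c)
    (Ψ Ψt : Matrix (Fin q' × Fin r) (Fin q) ℝ)
    (hΨ : ∀ k a j, Ψ (k, a) j = ψ j k a)
    (hΨt : ∀ k a j, Ψt (k, a) j = ψt k j a)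
    (α : ℝ) (hα : 0 < α)
    (hpool : Φt * Φᵀ = α • 1)
    (hfilt : Ψ * Ψtᵀ = (1 / (r * α)) • 1) :
    D * Eᵀ = 1 := by
  ext ⟨k, i⟩ ⟨k', i'⟩
  rw [Matrix.mul_apply, Fintype.sum_prod_type]
  simp only [transpose_apply, hD, hE, conv_pad]
  rw [quad (fun b c => Φt (i - ((b : Fin r) : ℕ)) c) (fun b' c => Φ (i' - ((b' : Fin r) : ℕ)) c)
    (fun b j => ψt k j b) (fun b' j => ψ j k' b')]
  have h1 : ∀ b b' : Fin r, (∑ j : Fin q, ψt k j b * ψ j k' b')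
      = (Ψ * Ψtᵀ) (k', b') (k, b) := by
    intro b b'
    rw [Matrix.mul_apply]
    simp only [transpose_apply, hΨ, hΨt]
    exact Finset.sum_congr rfl fun j _ => mul_comm _ _
  have h2 : ∀ b b' : Fin r,
      (∑ c : ZMod m, Φt (i - ((b : ℕ) : ZMod m')) c * Φ (i' - ((b' : ℕ) : ZMod m')) c)
      = (Φt * Φᵀ) (i - ((b : ℕ) : ZMod m')) (i' - ((b' : ℕ) : ZMod m')) := by
    intro b b'
    rw [Matrix.mul_apply]
    simp [transpose_apply]
  simp only [h1, h2, hpool, hfilt, Matrix.smul_apply, Matrix.one_apply, smul_eq_mul]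
  by_cases hk : k = k'
  · subst hk
    have hstep : ∀ b : Fin r,
        (∑ b' : Fin r, ((1 / ((r : ℝ) * α)) * if ((k, b') : Fin q' × Fin r) = (k, b) then 1 else 0) *
          (α * if i - ((b : ℕ) : ZMod m') = i' - ((b' : ℕ) : ZMod m') then 1 else 0))
        = if i = i' then 1 / (↑r : ℝ) else 0 := by
      intro b
      rw [Finset.sum_eq_single b]
      · rw [if_pos rfl]
        have hiff : (i - ((b : ℕ) : ZMod m') = i' - ((b : ℕ) : ZMod m')) ↔ i = i' := sub_left_inj
        by_cases hii : i = i'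
        · rw [if_pos (hiff.mpr hii), if_pos hii, mul_one, mul_one]
          field_simp
        · rw [if_neg (fun h => hii (hiff.mp h)), if_neg hii, mul_zero, mul_zero]
      · intro b' _ hb'
        rw [if_neg (by simp [Prod.ext_iff, hb']), mul_zero, zero_mul]
      · intro h; exact absurd (Finset.mem_univ b) h
    rw [Finset.sum_congr rfl fun b _ => hstep b]
    rw [Finset.sum_const, Finset.card_univ, Fintype.card_fin]
    by_cases hii : i = i'
    · rw [if_pos hii, if_pos (by rw [hii]), nsmul_eq_mul, mul_one_div,
        div_self (by exact_mod_cast hr.ne')]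
    · rw [if_neg hii, smul_zero, if_neg (by simp [Prod.ext_iff, hii])]
  · have hz : ∀ b b' : Fin r,
        (((1 / ((r : ℝ) * α)) * if ((k', b') : Fin q' × Fin r) = (k, b) then 1 else 0) *
          (α * if i - ((b : ℕ) : ZMod m') = i' - ((b' : ℕ) : ZMod m') then 1 else 0)) = 0 := by
      intro b b'
      rw [if_neg (fun h => hk ((congrArg Prod.fst h)).symm), mul_zero, zero_mul]
    rw [Finset.sum_congr rfl fun b _ => Finset.sum_congr rfl fun b' _ => hz b b']
    simp [Prod.ext_iff, hk]
end

section
/- Consider a κ-layer encoder-decoder CNN without skipped connections and without ReLU nonlinearities, with encoder matrices E^l and decoder matrices D^l (l ∈ [κ]) built from pooling Φ^l, unpooling Φ̃^l and filters ψ^l_{j,k}, ψ̃^l_{k,j}, and filter matrices Ψ^l, Ψ̃^l. If for every l ∈ [κ] the frame conditions Φ̃^l Φ^{lᵀ} = α I_{m_{l−1}} and Ψ^l Ψ̃^{lᵀ} = (1/(rα)) I_{r q_{l−1}} hold for some α > 0 (the same for all l), then with B := E¹E²⋯E^κ and B̃ := D¹D²⋯D^κ one has B̃ Bᵀ = I_{d₀};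 equivalently, x = Σ_i ⟨b_i, x⟩ b̃_i for every x ∈ ℝ^{d₀}, where b_i and b̃_i denote the i-th columns of B and B̃ (perfect reconstruction by the deep convolutional framelet). -/
open Matrix




/-- The chained product `A¹A²⋯A^l` of layer matrices (`chainProd … 0 = I`). -/
def chainProd (m q : ℕ → ℕ) [∀ l, NeZero (m l)]
    (A : (l : ℕ) → Matrix (Fin (q l) × ZMod (m l)) (Fin (q (l + 1)) × ZMod (m (l + 1))) ℝ) :
    (l : ℕ) → Matrix (Fin (q 0) × ZMod (m 0)) (Fin (q l) × ZMod (m l)) ℝ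
  | 0 => 1
  | l + 1 => chainProd m q A l * A l

lemma pad_sum {n r : ℕ} [NeZero n] (f g : Fin r → ℝ) (i i' : ZMod n) :
    ∑ a : ZMod n, pad (n := n) f (i - a) * pad (n := n) g (i' - a)
    = ∑ t : Fin r, ∑ t' : Fin r,
        (if (((t' : ℕ) : ZMod n)) = ((t : ℕ) : ZMod n) + (i' - i) then f t * g t' else 0) := by
  unfold pad
  simp only [Finset.sum_mul_sum]
  rw [Finset.sum_comm]
  congr 1; ext t
  rw [Finset.sum_comm]
  congr 1; ext t'
  have : ∀ a : ZMod n,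
      (if (((t : ℕ) : ZMod n)) = i - a then f t else 0) *
        (if (((t' : ℕ) : ZMod n)) = i' - a then g t' else 0)
      = if a = i - ((t : ℕ) : ZMod n) then
          (if (((t' : ℕ) : ZMod n)) = i' - a then f t * g t' else 0) else 0 := by
    intro a
    by_cases h : ((t : ℕ) : ZMod n) = i - a
    · have ha : a = i - ((t : ℕ) : ZMod n) := by rw [h]; ring
      rw [if_pos h, if_pos ha, mul_ite, mul_zero]
    · have ha : ¬ a = i - ((t : ℕ) : ZMod n) := by
        intro hc; apply h; rw [hc]; ring
      rw [if_neg h, if_neg ha, zero_mul]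
  simp only [this]
  rw [Finset.sum_ite_eq' Finset.univ]
  simp only [Finset.mem_univ, if_true]
  congr 1
  have : i' - (i - ((t : ℕ) : ZMod n)) = ((t : ℕ) : ZMod n) + (i' - i) := by ring
  rw [this]

section helper
variable {n n' : ℕ} [NeZero n] [NeZero n'] {p p' : ℕ}

lemma layer {r : ℕ} (hrn : r ≤ n) (hrpos : 0 < r)
    (Φ Φt : Matrix (ZMod n) (ZMod n') ℝ)
    (ψ : Fin p' → Fin p → Fin r → ℝ)
    (ψt : Fin p → Fin p' → Fin r → ℝ)
    (E D : Matrix (Fin p × ZMod n) (Fin p' × ZMod n') ℝ)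
    (hE : ∀ k j i c, E (k, i) (j, c) = matConv Φ (pad (ψ j k)) i c)
    (hD : ∀ k j i c, D (k, i) (j, c) = matConv Φt (pad (ψt k j)) i c)
    (α : ℝ) (hα : 0 < α)
    (hpool : ∀ a b : ZMod n, ∑ c : ZMod n', Φt a c * Φ b c = if a = b then α else 0)
    (hfilt : ∀ (k k' : Fin p) (t t' : Fin r),
      ∑ j : Fin p', ψt k j t * ψ j k' t' = if k = k' ∧ t = t' then 1 / (r * α) else 0) :
    D * Eᵀ = 1 := by
  ext ⟨k, i⟩ ⟨k', i'⟩
  rw [Matrix.mul_apply]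
  simp only [Matrix.transpose_apply]
  rw [show (1 : Matrix (Fin p × ZMod n) (Fin p × ZMod n) ℝ) (k, i) (k', i')
      = if (k, i) = (k', i') then 1 else 0 from Matrix.one_apply]
  have expand : ∀ x : Fin p' × ZMod n',
      D (k, i) x * E (k', i') x
      = ∑ a : ZMod n, ∑ b : ZMod n,
          (Φt a x.2 * Φ b x.2) *
          (pad (n := n) (ψt k x.1) (i - a) * pad (n := n) (ψ x.1 k') (i' - b)) := by
    rintro ⟨j, c⟩
    rw [hD, hE]
    simp only [matConv, cconv]
    rw [Finset.sum_mul_sum]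
    congr 1; ext a; congr 1; ext b; ring
  rw [Fintype.sum_prod_type]
  have h1 : ∀ j : Fin p',
      ∑ c : ZMod n', D (k, i) (j, c) * E (k', i') (j, c)
      = α * ∑ a : ZMod n, pad (n := n) (ψt k j) (i - a) * pad (n := n) (ψ j k') (i' - a) := by
    intro j
    simp only [expand]
    rw [Finset.sum_comm]
    rw [Finset.mul_sum]
    congr 1; ext a
    rw [Finset.sum_comm]
    have : ∀ b : ZMod n,
        ∑ c : ZMod n', Φt a c * Φ b c * (pad (n := n) (ψt k j) (i - a) * pad (n := n) (ψ j k') (i' - b))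
        = (if a = b then α else 0) * (pad (n := n) (ψt k j) (i - a) * pad (n := n) (ψ j k') (i' - b)) := by
      intro b
      rw [← Finset.sum_mul, hpool a b]
    simp only [this, ite_mul, zero_mul]
    rw [Finset.sum_ite_eq Finset.univ a]
    simp
  simp only [h1]
  rw [← Finset.mul_sum]
  simp only [pad_sum]
  have h2 : ∀ t t' : Fin r,
      ∑ j : Fin p', (if (((t' : ℕ) : ZMod n)) = ((t : ℕ) : ZMod n) + (i' - i)
          then ψt k j t * ψ j k' t' else 0)
      = if (((t' : ℕ) : ZMod n)) = ((t : ℕ) : ZMod n) + (i' - i)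
          then (if k = k' ∧ t = t' then 1 / (r * α) else 0) else 0 := by
    intro t t'
    split
    · exact hfilt k k' t t'
    · simp
  have h3 : ∑ j : Fin p', ∑ t : Fin r, ∑ t' : Fin r,
        (if (((t' : ℕ) : ZMod n)) = ((t : ℕ) : ZMod n) + (i' - i)
          then ψt k j t * ψ j k' t' else 0)
      = ∑ t : Fin r, ∑ t' : Fin r,
        (if (((t' : ℕ) : ZMod n)) = ((t : ℕ) : ZMod n) + (i' - i)
          then (if k = k' ∧ t = t' then 1 / (r * α) else 0) else 0) := by
    rw [Finset.sum_comm]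
    congr 1; ext t
    rw [Finset.sum_comm]
    congr 1; ext t'
    exact h2 t t'
  rw [h3]
  have hfin : ∑ t : Fin r, ∑ t' : Fin r,
        (if (((t' : ℕ) : ZMod n)) = ((t : ℕ) : ZMod n) + (i' - i)
          then (if k = k' ∧ t = t' then 1 / (r * α) else 0) else 0)
      = if (k, i) = (k', i') then 1 / α else 0 := by
    by_cases hk : k = k'
    · by_cases hi : i = i'
      · subst hk; subst hi
        have step : ∀ t t' : Fin r,
            (if (((t' : ℕ) : ZMod n)) = ((t : ℕ) : ZMod n) + (i - i)
              then (if k = k ∧ t = t' then 1 / (r * α) else 0) else 0)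
            = if t' = t then 1 / (r * α) else 0 := by
          intro t t'
          by_cases h : t' = t
          · subst h
            rw [if_pos, if_pos ⟨rfl, rfl⟩, if_pos rfl]
            rw [sub_self, add_zero]
          · rw [if_neg h]
            split
            · rw [if_neg]; rintro ⟨-, ht⟩; exact h ht.symm
            · rfl
        rw [Finset.sum_congr rfl fun t _ => Finset.sum_congr rfl fun t' _ => step t t']
        simp only [Finset.sum_ite_eq' Finset.univ, Finset.mem_univ, if_true]
        rw [Finset.sum_const, Finset.card_univ, Fintype.card_fin, nsmul_eq_mul,
          mul_one_div, div_eq_div_iff (by positivity) hα.ne']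
        ring
      · rw [if_neg (by simp [hi])]
        apply Finset.sum_eq_zero; intro t _
        apply Finset.sum_eq_zero; intro t' _
        split
        · rename_i hcast
          split
          · rename_i hkt
            exfalso
            obtain ⟨-, ht⟩ := hkt
            subst ht
            have h0 : i' - i = 0 := left_eq_add.mp hcast
            exact hi (sub_eq_zero.mp h0).symm
          · rfl
        · rfl
    · rw [if_neg (by simp [hk])]
      apply Finset.sum_eq_zero; intro t _
      apply Finset.sum_eq_zero; intro t' _
      split
      · rw [if_neg (by rintro ⟨hkk, -⟩; exact hk hkk)]
      · rfl
  rw [hfin]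
  split
  · rename_i h
    rw [mul_one_div, div_self hα.ne']
  · rw [mul_zero]


end helper

/-- κ-layer encoder-decoder CNN without skipped connections and without
ReLU: if the frame conditions `Φ̃^l Φ^{lᵀ} = α I` and `Ψ^l Ψ̃^{lᵀ} = (1/(rα)) I` hold for
all layers `l ∈ [κ]`, then `B̃ Bᵀ = I_{d₀}` for `B = E¹⋯E^κ`, `B̃ = D¹⋯D^κ`; equivalently
`x = Σ_i ⟨b_i, x⟩ b̃_i` for all `x ∈ ℝ^{d₀}`. -/
theorem stmt_8 {κ r : ℕ} (m q : ℕ → ℕ) [∀ l, NeZero (m l)]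
    (hr : ∀ l, r ≤ m l) (hrpos : 0 < r)
    (Φ Φt : (l : ℕ) → Matrix (ZMod (m l)) (ZMod (m (l + 1))) ℝ)
    (ψ : (l : ℕ) → Fin (q (l + 1)) → Fin (q l) → Fin r → ℝ)
    (ψt : (l : ℕ) → Fin (q l) → Fin (q (l + 1)) → Fin r → ℝ)
    (E D : (l : ℕ) → Matrix (Fin (q l) × ZMod (m l)) (Fin (q (l + 1)) × ZMod (m (l + 1))) ℝ)
    (hE : ∀ l k j i c, E l (k, i) (j, c) = matConv (Φ l) (pad (ψ l j k)) i c)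
    (hD : ∀ l k j i c, D l (k, i) (j, c) = matConv (Φt l) (pad (ψt l k j)) i c)
    (Ψ Ψt : (l : ℕ) → Matrix (Fin (q l) × Fin r) (Fin (q (l + 1))) ℝ)
    (hΨ : ∀ l k a j, Ψ l (k, a) j = ψ l j k a)
    (hΨt : ∀ l k a j, Ψt l (k, a) j = ψt l k j a)
    (α : ℝ) (hα : 0 < α)
    (hpool : ∀ l < κ, Φt l * (Φ l)ᵀ = α • 1)
    (hfilt : ∀ l < κ, Ψ l * (Ψt l)ᵀ = (1 / (r * α)) • 1) :
    chainProd m q D κ * (chainProd m q E κ)ᵀ = 1 ∧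
    ∀ (x : Fin (q 0) × ZMod (m 0) → ℝ) (i : Fin (q 0) × ZMod (m 0)),
      x i = ∑ c : Fin (q κ) × ZMod (m κ),
        (∑ a, chainProd m q E κ a c * x a) * chainProd m q D κ i c := by

  have hlayer : ∀ l < κ, D l * (E l)ᵀ = 1 := by
    intro l hl
    apply layer (hr l) hrpos (Φ l) (Φt l) (ψ l) (ψt l) (E l) (D l)
      (hE l) (hD l) α hα
    · intro a b
      have h := congrFun (congrFun (hpool l hl) a) b
      rw [Matrix.mul_apply] at h
      simp only [Matrix.transpose_apply] at h
      rw [h, Matrix.smul_apply, Matrix.one_apply]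
      split <;> simp
    · intro k k' t t'
      have h := congrFun (congrFun (hfilt l hl) (k', t')) (k, t)
      rw [Matrix.mul_apply] at h
      simp only [Matrix.transpose_apply, hΨ, hΨt] at h
      rw [show (∑ j, ψt l k j t * ψ l j k' t') = ∑ j, ψ l j k' t' * ψt l k j t from
        Finset.sum_congr rfl fun j _ => mul_comm _ _, h, Matrix.smul_apply, Matrix.one_apply]
      by_cases hkt : k = k' ∧ t = t'
      · obtain ⟨hk, ht⟩ := hkt
        subst hk; subst ht
        rw [if_pos rfl, if_pos ⟨rfl, rfl⟩, smul_eq_mul, mul_one]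
      · rw [if_neg hkt, if_neg (fun hc => hkt ⟨((Prod.mk.injEq _ _ _ _).mp hc).1.symm,
          ((Prod.mk.injEq _ _ _ _).mp hc).2.symm⟩), smul_zero]
  have hchain : ∀ l ≤ κ, chainProd m q D l * (chainProd m q E l)ᵀ = 1 := by
    intro l
    induction l with
    | zero =>
      intro _
      show (1 : Matrix _ _ ℝ) * (1 : Matrix _ _ ℝ)ᵀ = 1
      rw [Matrix.transpose_one, Matrix.one_mul]
    | succ l ih =>
      intro h
      show chainProd m q D l * D l * (chainProd m q E l * E l)ᵀ = 1
      rw [Matrix.transpose_mul, Matrix.mul_assoc, ← Matrix.mul_assoc (D l),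
        hlayer l (Nat.lt_of_succ_le h), Matrix.one_mul, ih (Nat.le_of_succ_le h)]
  have h1 : chainProd m q D κ * (chainProd m q E κ)ᵀ = 1 := hchain κ le_rfl
  refine ⟨h1, fun x i => ?_⟩
  have h2 : ∀ c, (∑ a, chainProd m q E κ a c * x a) = ((chainProd m q E κ)ᵀ *ᵥ x) c := by
    intro c
    simp [Matrix.mulVec, dotProduct, Matrix.transpose_apply]
  calc x i = ((chainProd m q D κ * (chainProd m q E κ)ᵀ) *ᵥ x) i := by
        rw [h1, Matrix.one_mulVec]
    _ = (chainProd m q D κ *ᵥ ((chainProd m q E κ)ᵀ *ᵥ x)) i := by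
        rw [← Matrix.mulVec_mulVec]
    _ = ∑ c, (∑ a, chainProd m q E κ a c * x a) * chainProd m q D κ i c := by
        simp only [Matrix.mulVec, dotProduct, h2]
        exact Finset.sum_congr rfl fun c _ => mul_comm _ _
end

section
/- Let m′, m, q′, q, r be positive integers with r ≤ m′. Let Φ, Φ̃ ∈ ℝ^{m′×m}, filters ψ_{j,k}, ψ̃_{k,j} ∈ ℝʳ (j ∈ [q], k ∈ [q′]), and let E, D ∈ ℝ^{m′q′×mq} be the block matrices with (k,j) blocks Φ ⊛ ψ_{j,k} and Φ̃ ⊛ ψ̃_{k,j}, Ψ, Ψ̃ ∈ ℝ^{rq′×q} the filter matrices with (k,j) blocks ψ_{j,k} and ψ̃_{k,j}, and S, S̃ ∈ ℝ^{m′q′×m′q} the skip matrices whose (k,j) blocks are the circulants I_{m′} ⊛ ψ_{j,k} and I_{m′} ⊛ ψ̃_{k,j} (identity pooling, filters zero-padded to ℝ^{m′}). If Φ̃Φᵀ = α I_{m′} for some α > 0 and ΨΨ̃ᵀ = (1/(r(α+1))) I_{rq′}, then D Eᵀ + S̃ Sᵀ = I_{m′q′}. -/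
open Matrix

/-- Single layer with skipped connection: if `Φ̃Φᵀ = α I_{m′}` (`α > 0`)
and `ΨΨ̃ᵀ = (1/(r(α+1))) I_{rq′}` then `D Eᵀ + S̃ Sᵀ = I_{m′q′}`, where `E, D` have blocks
`Φ ⊛ ψ_{j,k}`, `Φ̃ ⊛ ψ̃_{k,j}` and the skip matrices `S, S̃` have circulant blocks
`I_{m′} ⊛ ψ_{j,k}`, `I_{m′} ⊛ ψ̃_{k,j}` (identity pooling). -/
theorem stmt_9 {m' m q' q r : ℕ} [NeZero m'] [NeZero m]
    (hq' : 0 < q') (hq : 0 < q) (hr : 0 < r) (hrm : r ≤ m')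
    (Φ Φt : Matrix (ZMod m') (ZMod m) ℝ)
    (ψ : Fin q → Fin q' → Fin r → ℝ) (ψt : Fin q' → Fin q → Fin r → ℝ)
    (E D : Matrix (Fin q' × ZMod m') (Fin q × ZMod m) ℝ)
    (hE : ∀ k j i c, E (k, i) (j, c) = matConv Φ (pad (ψ j k)) i c)
    (hD : ∀ k j i c, D (k, i) (j, c) = matConv Φt (pad (ψt k j)) i c)
    (S St : Matrix (Fin q' × ZMod m') (Fin q × ZMod m') ℝ)
    (hS : ∀ k j i c, S (k, i) (j, c) = Matrix.circulant (pad (ψ j k)) i c)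
    (hSt : ∀ k j i c, St (k, i) (j, c) = Matrix.circulant (pad (ψt k j)) i c)
    (Ψ Ψt : Matrix (Fin q' × Fin r) (Fin q) ℝ)
    (hΨ : ∀ k a j, Ψ (k, a) j = ψ j k a)
    (hΨt : ∀ k a j, Ψt (k, a) j = ψt k j a)
    (α : ℝ) (hα : 0 < α)
    (hpool : Φt * Φᵀ = α • 1)
    (hfilt : Ψ * Ψtᵀ = (1 / (r * (α + 1))) • 1) :
    D * Eᵀ + St * Sᵀ = 1 := by
  have hα1 : α + 1 ≠ 0 := by positivity
  have hrR : (r : ℝ) ≠ 0 := Nat.cast_ne_zero.mpr hr.ne'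
  -- entrywise pooling identity
  have hpool' : ∀ a b : ZMod m', (∑ c : ZMod m, Φt a c * Φ b c)
      = α * (if a = b then 1 else 0) := by
    intro a b
    have h := congrFun (congrFun hpool a) b
    simpa [Matrix.mul_apply, Matrix.transpose_apply, Matrix.smul_apply,
      Matrix.one_apply, smul_eq_mul] using h
  -- entrywise filter identity
  have hfilt' : ∀ (k₁ k₂ : Fin q') (u v : Fin r),
      (∑ j : Fin q, ψ j k₁ u * ψt k₂ j v)
      = (1 / (r * (α + 1))) * (if k₁ = k₂ ∧ u = v then 1 else 0) := by
    intro k₁ k₂ u v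
    have h := congrFun (congrFun hfilt (k₁, u)) (k₂, v)
    simpa [Matrix.mul_apply, Matrix.transpose_apply, Matrix.smul_apply,
      Matrix.one_apply, smul_eq_mul, hΨ, hΨt, Prod.ext_iff] using h
  ext ⟨k, i⟩ ⟨k', i'⟩
  -- per-filter column identity
  have hcol : ∀ (φ χ : ZMod m' → ℝ),
      (∑ c : ZMod m, (∑ a : ZMod m', Φt a c * φ a) * (∑ b : ZMod m', Φ b c * χ b))
      = α * ∑ a : ZMod m', φ a * χ a := by
    intro φ χ
    have h1 : ∀ c : ZMod m, (∑ a : ZMod m', Φt a c * φ a) * (∑ b : ZMod m', Φ b c * χ b)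
        = ∑ a : ZMod m', ∑ b : ZMod m', (φ a * χ b) * (Φt a c * Φ b c) := by
      intro c
      rw [Finset.sum_mul_sum]
      exact Finset.sum_congr rfl fun a _ => Finset.sum_congr rfl fun b _ => by ring
    simp only [h1]
    rw [Finset.sum_comm]
    calc (∑ a : ZMod m', ∑ c : ZMod m, ∑ b : ZMod m', (φ a * χ b) * (Φt a c * Φ b c))
        = ∑ a : ZMod m', ∑ b : ZMod m', (φ a * χ b) * ∑ c : ZMod m, Φt a c * Φ b c := by
          refine Finset.sum_congr rfl fun a _ => ?_
          rw [Finset.sum_comm]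
          exact Finset.sum_congr rfl fun b _ => by rw [Finset.mul_sum]
      _ = α * ∑ a : ZMod m', φ a * χ a := by
          simp only [hpool', mul_ite, mul_one, mul_zero, Finset.sum_ite_eq,
            Finset.mem_univ, if_true, Finset.mul_sum]
          exact Finset.sum_congr rfl fun a _ => by ring
  -- key combinatorial identity for padded filters
  have hkey : ∀ (φ χ : Fin r → ℝ),
      (∑ a : ZMod m', pad (n := m') φ (i - a) * pad (n := m') χ (i' - a))
      = ∑ u : Fin r, ∑ v : Fin r,
          if ((v : ℕ) : ZMod m') + i = ((u : ℕ) : ZMod m') + i' then φ u * χ v else 0 := by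
    intro φ χ
    simp only [pad, Finset.sum_mul_sum, ite_mul, zero_mul, mul_ite, mul_zero]
    rw [Finset.sum_comm]
    refine Finset.sum_congr rfl fun u _ => ?_
    rw [Finset.sum_comm]
    refine Finset.sum_congr rfl fun v _ => ?_
    rw [Finset.sum_eq_single (i' - ((v : ℕ) : ZMod m'))]
    · rw [if_pos (sub_sub_cancel i' ((v : ℕ) : ZMod m')).symm]
      have hiff : (((u : ℕ) : ZMod m') = i - (i' - ((v : ℕ) : ZMod m')))
          ↔ (((v : ℕ) : ZMod m') + i = ((u : ℕ) : ZMod m') + i') := by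
        constructor <;> intro h <;> linear_combination -h
      exact if_congr hiff rfl rfl
    · intro a _ ha
      rw [if_neg]
      intro h
      exact ha (by rw [h, sub_sub_cancel])
    · intro h
      exact absurd (Finset.mem_univ _) h
  -- the main combined sum
  have hmain : (∑ j : Fin q, ∑ a : ZMod m',
        pad (n := m') (ψt k j) (i - a) * pad (n := m') (ψ j k') (i' - a))
      = (1 / (α + 1)) * (if k = k' ∧ i = i' then 1 else 0) := by
    simp only [hkey]
    rw [Finset.sum_comm]
    have step : ∀ u : Fin r, (∑ j : Fin q, ∑ v : Fin r,
          if ((v : ℕ) : ZMod m') + i = ((u : ℕ) : ZMod m') + i' then ψt k j u * ψ j k' v else 0)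
        = ∑ v : Fin r, if ((v : ℕ) : ZMod m') + i = ((u : ℕ) : ZMod m') + i' then
            (1 / (r * (α + 1))) * (if k' = k ∧ v = u then 1 else 0) else 0 := by
      intro u
      rw [Finset.sum_comm]
      refine Finset.sum_congr rfl fun v _ => ?_
      split
      · rw [← hfilt' k' k v u]
        exact Finset.sum_congr rfl fun j _ => mul_comm _ _
      · simp
    simp only [step]
    by_cases hk : k' = k
    · subst hk
      by_cases hi : i = i'
      · subst hi
        have : ∀ u : Fin r, (∑ v : Fin r,
            if ((v : ℕ) : ZMod m') + i = ((u : ℕ) : ZMod m') + i then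
              (1 / (r * (α + 1))) * (if k' = k' ∧ v = u then 1 else 0) else 0)
            = 1 / (r * (α + 1)) := by
          intro u
          rw [Finset.sum_eq_single u]
          · simp
          · intro v _ hv
            split
            · simp [hv]
            · rfl
          · intro h; exact absurd (Finset.mem_univ _) h
        rw [Finset.sum_congr rfl fun u _ => this u, Finset.sum_const, Finset.card_univ,
          Fintype.card_fin, nsmul_eq_mul, if_pos ⟨rfl, rfl⟩]
        field_simp
      · rw [if_neg (fun h => hi h.2)]
        rw [Finset.sum_eq_zero]
        · ring
        intro u _
        rw [Finset.sum_eq_zero]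
        intro v _
        split
        · rename_i hc
          split
          · rename_i hkv
            exfalso
            apply hi
            have := hc
            rw [hkv.2] at this
            exact add_left_cancel this
          · ring
        · rfl
    · rw [if_neg (fun h => hk h.1.symm)]
      rw [Finset.sum_eq_zero]
      · ring
      intro u _
      rw [Finset.sum_eq_zero]
      intro v _
      split
      · rw [if_neg (fun h => hk h.1)]; ring
      · rfl
  -- assemble the matrix entry
  have hDE : (∑ p : Fin q × ZMod m, D (k, i) p * E (k', i') p)
      = α * ∑ j : Fin q, ∑ a : ZMod m',
          pad (n := m') (ψt k j) (i - a) * pad (n := m') (ψ j k') (i' - a) := by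
    rw [Fintype.sum_prod_type, Finset.mul_sum]
    refine Finset.sum_congr rfl fun j _ => ?_
    simp only [hD, hE, matConv, cconv]
    exact hcol (fun a => pad (ψt k j) (i - a)) (fun b => pad (ψ j k') (i' - b))
  have hSS : (∑ p : Fin q × ZMod m', St (k, i) p * S (k', i') p)
      = ∑ j : Fin q, ∑ a : ZMod m',
          pad (n := m') (ψt k j) (i - a) * pad (n := m') (ψ j k') (i' - a) := by
    rw [Fintype.sum_prod_type]
    refine Finset.sum_congr rfl fun j _ => Finset.sum_congr rfl fun c _ => ?_
    simp [hS, hSt, Matrix.circulant_apply]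
  have lhs_eq : (D * Eᵀ + St * Sᵀ) (k, i) (k', i')
      = (∑ p : Fin q × ZMod m, D (k, i) p * E (k', i') p)
        + (∑ p : Fin q × ZMod m', St (k, i) p * S (k', i') p) := by
    simp [Matrix.add_apply, Matrix.mul_apply, Matrix.transpose_apply]
  rw [lhs_eq, hDE, hSS, hmain, Matrix.one_apply]
  by_cases h : (k, i) = ((k', i') : Fin q' × ZMod m')
  · rw [if_pos h]
    obtain ⟨h1, h2⟩ := Prod.mk.injEq .. ▸ h
    rw [if_pos ⟨h1, h2⟩]
    field_simp
  · rw [if_neg h, if_neg (fun hc => h (Prod.ext hc.1 hc.2))]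
    ring
end

section
/- Consider a κ-layer encoder-decoder CNN with skipped connections and without ReLU nonlinearities, with encoder, decoder and skip matrices E^l, D^l, S^l, S̃^l (l ∈ [κ]) and filter matrices Ψ^l, Ψ̃^l. If for every l ∈ [κ] the frame conditions Φ̃^l Φ^{lᵀ} = α I_{m_{l−1}} and Ψ^l Ψ̃^{lᵀ} = (1/(r(α+1))) I_{r q_{l−1}} hold for some α > 0, then, with the frame matrices B^{skp} := [E¹⋯E^κ, E¹⋯E^{κ−1}S^κ, …, E¹S², S¹] and B̃^{skp} := [D¹⋯D^κ, D¹⋯D^{κ−1}S̃^κ, …, D¹S̃², S̃¹] (both in ℝ^{d₀×(d_κ + Σ_{l=1}^κ s_l)}), one has B̃^{skp} B^{skp⊤} = I_{d₀}; equivalently x = Σ_i ⟨b_i^{skp}, x⟩ b̃_i^{skp} for every x ∈ ℝ^{d₀}, where b_i^{skp}, b̃_i^{skp} are the columns of B^{skp} and B̃^{skp}. -/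
open Matrix

/-- Column index type of the skip frame matrix `B^{skp} ∈ ℝ^{d₀×(d_κ+Σ_l s_l)}`. -/
abbrev SkipIdx (κ : ℕ) (m q : ℕ → ℕ) :=
  (Fin (q κ) × ZMod (m κ)) ⊕ (Σ l : Fin κ, Fin (q (l + 1)) × ZMod (m l))

/-- The frame matrix `B^{skp} = [E¹⋯E^κ, E¹⋯E^{κ−1}S^κ, …, E¹S², S¹]`
(and likewise `B̃^{skp}` when applied to the decoder matrices). -/
def skipFrame (κ : ℕ) (m q : ℕ → ℕ) [∀ l, NeZero (m l)]
    (E : (l : ℕ) → Matrix (Fin (q l) × ZMod (m l)) (Fin (q (l + 1)) × ZMod (m (l + 1))) ℝ)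
    (S : (l : ℕ) → Matrix (Fin (q l) × ZMod (m l)) (Fin (q (l + 1)) × ZMod (m l)) ℝ) :
    Matrix (Fin (q 0) × ZMod (m 0)) (SkipIdx κ m q) ℝ :=
  fun i c => match c with
  | Sum.inl j => chainProd m q E κ i j
  | Sum.inr ⟨l, j⟩ => (chainProd m q E l * S l) i j

lemma padT {n r : ℕ} [NeZero n] (φ ψ : Fin r → ℝ) (i i' : ZMod n) :
    ∑ c : ZMod n, pad (n := n) φ (i - c) * pad (n := n) ψ (i' - c)
      = ∑ a : Fin r, ∑ b : Fin r,
          if ((b : ℕ) : ZMod n) - ((a : ℕ) : ZMod n) = i' - i then φ a * ψ b else 0 := by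
  have expand : ∀ c : ZMod n, pad (n := n) φ (i - c) * pad (n := n) ψ (i' - c)
      = ∑ a : Fin r, ∑ b : Fin r,
          (if ((a : ℕ) : ZMod n) = i - c then φ a else 0) *
          (if ((b : ℕ) : ZMod n) = i' - c then ψ b else 0) := by
    intro c; rw [pad, pad, Finset.sum_mul_sum]
  simp only [expand]
  rw [Finset.sum_comm]
  refine Finset.sum_congr rfl fun a _ => ?_
  rw [Finset.sum_comm]
  refine Finset.sum_congr rfl fun b _ => ?_
  have h1 : ∀ c : ZMod n, (if ((a : ℕ) : ZMod n) = i - c then φ a else 0) *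
      (if ((b : ℕ) : ZMod n) = i' - c then ψ b else 0)
      = if c = i - ((a : ℕ) : ZMod n) then
          (if ((b : ℕ) : ZMod n) = i' - c then φ a * ψ b else 0) else 0 := by
    intro c
    by_cases h : ((a : ℕ) : ZMod n) = i - c
    · have hc : c = i - ((a : ℕ) : ZMod n) := by rw [h]; ring
      rw [if_pos h, if_pos hc]
      by_cases h2 : ((b : ℕ) : ZMod n) = i' - c
      · rw [if_pos h2, if_pos h2]
      · rw [if_neg h2, if_neg h2, mul_zero]
    · have hc : ¬ c = i - ((a : ℕ) : ZMod n) := by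
        intro hc; apply h; rw [hc]; ring
      rw [if_neg h, if_neg hc, zero_mul]
  simp only [h1]
  rw [Finset.sum_ite_eq' Finset.univ (i - ((a : ℕ) : ZMod n))
      (fun c => if ((b : ℕ) : ZMod n) = i' - c then φ a * ψ b else 0)]
  simp only [Finset.mem_univ, if_true]
  apply if_congr _ rfl rfl
  constructor
  · intro h; rw [h]; ring
  · intro h
    have : ((b : ℕ) : ZMod n) = i' - i + ((a : ℕ) : ZMod n) := by
      rw [← h]; ring
    rw [this]; ring

lemma conv_pool {m0 m1 : ℕ} [NeZero m0] [NeZero m1]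
    (Φ Φt : Matrix (ZMod m0) (ZMod m1) ℝ) (α : ℝ) (hp : Φt * Φᵀ = α • 1)
    (P Q : ZMod m0 → ℝ) :
    ∑ c : ZMod m1, (∑ a, Φt a c * P a) * (∑ b, Φ b c * Q b) = α * ∑ a, P a * Q a := by
  have key : (P ᵥ* Φt) ⬝ᵥ (Q ᵥ* Φ) = α * (P ⬝ᵥ Q) := by
    rw [show Q ᵥ* Φ = Φᵀ *ᵥ Q from (Matrix.mulVec_transpose Φ Q).symm,
      Matrix.dotProduct_mulVec, Matrix.vecMul_vecMul, hp]
    simp only [Matrix.vecMul, dotProduct, Matrix.smul_apply, Matrix.one_apply, smul_eq_mul, mul_ite, mul_zero, mul_one, Finset.sum_ite_eq, Finset.sum_ite_eq', Finset.mem_univ, if_true, Finset.mul_sum]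
    exact Finset.sum_congr rfl fun x _ => by ring
  calc ∑ c : ZMod m1, (∑ a, Φt a c * P a) * (∑ b, Φ b c * Q b)
      = (P ᵥ* Φt) ⬝ᵥ (Q ᵥ* Φ) := by
        simp only [dotProduct, Matrix.vecMul, dotProduct]
        exact Finset.sum_congr rfl fun c _ => by
          congr 1
          · exact Finset.sum_congr rfl fun a _ => mul_comm _ _
          · exact Finset.sum_congr rfl fun b _ => mul_comm _ _
    _ = α * ∑ a, P a * Q a := by rw [key]; rfl

lemma key_block {r m0 m1 q0 q1 : ℕ} [NeZero m0] [NeZero m1] (hrpos : 0 < r)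
    (Φ Φt : Matrix (ZMod m0) (ZMod m1) ℝ)
    (ψ : Fin q1 → Fin q0 → Fin r → ℝ) (ψt : Fin q0 → Fin q1 → Fin r → ℝ)
    (E D : Matrix (Fin q0 × ZMod m0) (Fin q1 × ZMod m1) ℝ)
    (hE : ∀ k j i c, E (k, i) (j, c) = matConv Φ (pad (ψ j k)) i c)
    (hD : ∀ k j i c, D (k, i) (j, c) = matConv Φt (pad (ψt k j)) i c)
    (S St : Matrix (Fin q0 × ZMod m0) (Fin q1 × ZMod m0) ℝ)
    (hS : ∀ k j i c, S (k, i) (j, c) = Matrix.circulant (pad (ψ j k)) i c)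
    (hSt : ∀ k j i c, St (k, i) (j, c) = Matrix.circulant (pad (ψt k j)) i c)
    (α : ℝ) (hα : 0 < α)
    (hpool : Φt * Φᵀ = α • 1)
    (hfilt : ∀ (k k' : Fin q0) (a b : Fin r),
      (∑ j, ψ j k' b * ψt k j a) = (1 / (r * (α + 1))) * (if k = k' ∧ a = b then 1 else 0)) :
    D * Eᵀ + St * Sᵀ = 1 := by
  ext ⟨k, i⟩ ⟨k', i'⟩
  rw [Matrix.add_apply, Matrix.mul_apply, Matrix.mul_apply]
  rw [Fintype.sum_prod_type, Fintype.sum_prod_type]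
  have hT1 : ∀ j : Fin q1, (∑ c : ZMod m1, D (k, i) (j, c) * Eᵀ (j, c) (k', i'))
      = α * ∑ a : Fin r, ∑ b : Fin r,
          if ((b : ℕ) : ZMod m0) - ((a : ℕ) : ZMod m0) = i' - i
          then ψt k j a * ψ j k' b else 0 := by
    intro j
    have : ∀ c : ZMod m1, D (k, i) (j, c) * Eᵀ (j, c) (k', i')
        = (∑ a, Φt a c * pad (ψt k j) (i - a)) * (∑ b, Φ b c * pad (ψ j k') (i' - b)) := by
      intro c
      rw [Matrix.transpose_apply, hD, hE, matConv, matConv, cconv, cconv]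
    simp only [this]
    rw [conv_pool Φ Φt α hpool, padT]
  have hT2 : ∀ j : Fin q1, (∑ c : ZMod m0, St (k, i) (j, c) * Sᵀ (j, c) (k', i'))
      = ∑ a : Fin r, ∑ b : Fin r,
          if ((b : ℕ) : ZMod m0) - ((a : ℕ) : ZMod m0) = i' - i
          then ψt k j a * ψ j k' b else 0 := by
    intro j
    have : ∀ c : ZMod m0, St (k, i) (j, c) * Sᵀ (j, c) (k', i')
        = pad (ψt k j) (i - c) * pad (ψ j k') (i' - c) := by
      intro c
      rw [Matrix.transpose_apply, hSt, hS, Matrix.circulant_apply, Matrix.circulant_apply]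
    simp only [this]
    rw [padT]
  simp only [hT1, hT2]
  -- combine
  have hcomb : ∀ j : Fin q1, (α * ∑ a : Fin r, ∑ b : Fin r,
          (if ((b : ℕ) : ZMod m0) - ((a : ℕ) : ZMod m0) = i' - i
          then ψt k j a * ψ j k' b else 0))
      + (∑ a : Fin r, ∑ b : Fin r,
          if ((b : ℕ) : ZMod m0) - ((a : ℕ) : ZMod m0) = i' - i
          then ψt k j a * ψ j k' b else 0)
      = ∑ a : Fin r, ∑ b : Fin r,
          if ((b : ℕ) : ZMod m0) - ((a : ℕ) : ZMod m0) = i' - i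
          then (α + 1) * (ψt k j a * ψ j k' b) else 0 := by
    intro j
    rw [Finset.mul_sum, ← Finset.sum_add_distrib]
    refine Finset.sum_congr rfl fun a _ => ?_
    rw [Finset.mul_sum, ← Finset.sum_add_distrib]
    refine Finset.sum_congr rfl fun b _ => ?_
    split_ifs with h
    · ring
    · ring
  rw [← Finset.sum_add_distrib]
  simp only [hcomb]
  rw [Finset.sum_comm]
  have hswap : ∀ a : Fin r, (∑ j : Fin q1, ∑ b : Fin r,
        (if ((b : ℕ) : ZMod m0) - ((a : ℕ) : ZMod m0) = i' - i
          then (α + 1) * (ψt k j a * ψ j k' b) else 0))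
      = ∑ b : Fin r, if b = a then (if k = k' ∧ i = i'
          then (α + 1) * (1 / (r * (α + 1))) else 0) else 0 := by
    intro a
    rw [Finset.sum_comm]
    refine Finset.sum_congr rfl fun b _ => ?_
    by_cases hc : ((b : ℕ) : ZMod m0) - ((a : ℕ) : ZMod m0) = i' - i
    · simp only [if_pos hc, ← Finset.mul_sum]
      rw [show (∑ j, ψt k j a * ψ j k' b) = ∑ j, ψ j k' b * ψt k j a from
        Finset.sum_congr rfl fun j _ => mul_comm _ _, hfilt]
      by_cases hab : a = b
      · subst hab
        have hii : i = i' := by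
          have h0 : ((a : ℕ) : ZMod m0) - ((a : ℕ) : ZMod m0) = 0 := sub_self _
          rw [h0] at hc
          have := hc.symm
          rw [sub_eq_zero] at this
          exact this.symm
        simp [hii]
      · rw [if_neg (fun h : b = a => hab h.symm)]
        simp [hab]
    · simp only [if_neg hc, Finset.sum_const_zero]
      by_cases hba : b = a
      · subst hba
        rw [if_pos rfl]
        by_cases hki : k = k' ∧ i = i'
        · exfalso; apply hc; rw [hki.2, sub_self, sub_self]
        · rw [if_neg hki]
      · rw [if_neg hba]
  simp only [hswap]
  simp only [Finset.sum_ite_eq' Finset.univ, Finset.mem_univ, if_true]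
  rw [Finset.sum_const, Finset.card_univ, Fintype.card_fin]
  rw [Matrix.one_apply]
  have hrne : (r : ℝ) ≠ 0 := Nat.cast_ne_zero.mpr hrpos.ne'
  have hα1 : α + 1 ≠ 0 := by positivity
  by_cases hki : k = k' ∧ i = i'
  · rw [if_pos hki, if_pos (by simp [hki.1, hki.2])]
    rw [nsmul_eq_mul]
    field_simp
  · rw [if_neg hki, if_neg (fun h => hki ⟨congrArg Prod.fst h, congrArg Prod.snd h⟩), smul_zero]

/-- κ-layer encoder-decoder CNN with skipped connections and without
ReLU: under the frame conditions `Φ̃^l Φ^{lᵀ} = α I` and `Ψ^l Ψ̃^{lᵀ} = (1/(r(α+1))) I`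
for all `l ∈ [κ]`, the frames `B^{skp}` and `B̃^{skp}` satisfy `B̃^{skp} B^{skpᵀ} = I_{d₀}`;
equivalently `x = Σ_i ⟨b_i^{skp}, x⟩ b̃_i^{skp}` for all `x ∈ ℝ^{d₀}`. -/
theorem stmt_10 {κ r : ℕ} (m q : ℕ → ℕ) [∀ l, NeZero (m l)]
    (hr : ∀ l, r ≤ m l) (hrpos : 0 < r)
    (Φ Φt : (l : ℕ) → Matrix (ZMod (m l)) (ZMod (m (l + 1))) ℝ)
    (ψ : (l : ℕ) → Fin (q (l + 1)) → Fin (q l) → Fin r → ℝ)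
    (ψt : (l : ℕ) → Fin (q l) → Fin (q (l + 1)) → Fin r → ℝ)
    (E D : (l : ℕ) → Matrix (Fin (q l) × ZMod (m l)) (Fin (q (l + 1)) × ZMod (m (l + 1))) ℝ)
    (hE : ∀ l k j i c, E l (k, i) (j, c) = matConv (Φ l) (pad (ψ l j k)) i c)
    (hD : ∀ l k j i c, D l (k, i) (j, c) = matConv (Φt l) (pad (ψt l k j)) i c)
    (S St : (l : ℕ) → Matrix (Fin (q l) × ZMod (m l)) (Fin (q (l + 1)) × ZMod (m l)) ℝ)
    (hS : ∀ l k j i c, S l (k, i) (j, c) = Matrix.circulant (pad (ψ l j k)) i c)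
    (hSt : ∀ l k j i c, St l (k, i) (j, c) = Matrix.circulant (pad (ψt l k j)) i c)
    (Ψ Ψt : (l : ℕ) → Matrix (Fin (q l) × Fin r) (Fin (q (l + 1))) ℝ)
    (hΨ : ∀ l k a j, Ψ l (k, a) j = ψ l j k a)
    (hΨt : ∀ l k a j, Ψt l (k, a) j = ψt l k j a)
    (α : ℝ) (hα : 0 < α)
    (hpool : ∀ l < κ, Φt l * (Φ l)ᵀ = α • 1)
    (hfilt : ∀ l < κ, Ψ l * (Ψt l)ᵀ = (1 / (r * (α + 1))) • 1) :
    skipFrame κ m q D St * (skipFrame κ m q E S)ᵀ = 1 ∧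
    ∀ (x : Fin (q 0) × ZMod (m 0) → ℝ) (i : Fin (q 0) × ZMod (m 0)),
      x i = ∑ c : SkipIdx κ m q,
        (∑ a, skipFrame κ m q E S a c * x a) * skipFrame κ m q D St i c := by
  -- pointwise filter condition
  have hfilt' : ∀ l < κ, ∀ (k k' : Fin (q l)) (a b : Fin r),
      (∑ j, ψ l j k' b * ψt l k j a)
        = (1 / (r * (α + 1))) * (if k = k' ∧ a = b then 1 else 0) := by
    intro l hl k k' a b
    have h := congrFun (congrFun (hfilt l hl) (k', b)) (k, a)
    rw [Matrix.mul_apply] at h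
    simp only [Matrix.transpose_apply, hΨ, hΨt, Matrix.smul_apply, Matrix.one_apply,
      smul_eq_mul] at h
    rw [h]
    congr 1
    apply if_congr _ rfl rfl
    constructor
    · intro hh
      exact ⟨(congrArg Prod.fst hh).symm, (congrArg Prod.snd hh).symm⟩
    · intro hh
      exact Prod.ext hh.1.symm hh.2.symm
  have key : ∀ l < κ, D l * (E l)ᵀ + St l * (S l)ᵀ = 1 := fun l hl =>
    key_block hrpos (Φ l) (Φt l) (ψ l) (ψt l) (E l) (D l) (hE l) (hD l)
      (S l) (St l) (hS l) (hSt l) α hα (hpool l hl) (hfilt' l hl)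
  have chain : ∀ n, n ≤ κ →
      chainProd m q D n * (chainProd m q E n)ᵀ
        + ∑ l : Fin n, chainProd m q D l * (St l * (S l)ᵀ) * (chainProd m q E l)ᵀ = 1 := by
    intro n
    induction n with
    | zero =>
      intro _
      show (1 : Matrix (Fin (q 0) × ZMod (m 0)) (Fin (q 0) × ZMod (m 0)) ℝ) * (1 : Matrix _ _ ℝ)ᵀ + _ = 1
      simp
    | succ n ih =>
      intro hn
      have hkey := key n (lt_of_lt_of_le (Nat.lt_succ_self n) hn)
      have ihn := ih (Nat.le_of_succ_le hn)
      rw [Fin.sum_univ_castSucc]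
      simp only [Fin.coe_castSucc, Fin.val_last]
      have h1 : chainProd m q D (n + 1) * (chainProd m q E (n + 1))ᵀ
          = chainProd m q D n * (chainProd m q E n)ᵀ
            - chainProd m q D n * (St n * (S n)ᵀ) * (chainProd m q E n)ᵀ := by
        rw [show chainProd m q D (n + 1) = chainProd m q D n * D n from rfl,
          show chainProd m q E (n + 1) = chainProd m q E n * E n from rfl,
          Matrix.transpose_mul]
        calc (chainProd m q D n * D n) * ((E n)ᵀ * (chainProd m q E n)ᵀ)
            = chainProd m q D n * (D n * (E n)ᵀ) * (chainProd m q E n)ᵀ := by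
              rw [Matrix.mul_assoc, Matrix.mul_assoc, Matrix.mul_assoc]
          _ = chainProd m q D n * (1 - St n * (S n)ᵀ) * (chainProd m q E n)ᵀ := by
              rw [eq_sub_of_add_eq hkey]
          _ = _ := by
              rw [Matrix.mul_sub, Matrix.mul_one, Matrix.sub_mul]
      rw [h1, ← ihn]
      abel
  have hd2 : ∀ l : Fin κ,
      (chainProd m q D l * St l) * ((chainProd m q E l * S l)ᵀ)
        = chainProd m q D l * (St l * (S l)ᵀ) * (chainProd m q E l)ᵀ := by
    intro l
    rw [Matrix.transpose_mul, ← Matrix.mul_assoc, Matrix.mul_assoc (chainProd m q D (l : ℕ))]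
  have hdecomp : skipFrame κ m q D St * (skipFrame κ m q E S)ᵀ
      = chainProd m q D κ * (chainProd m q E κ)ᵀ
        + ∑ l : Fin κ, (chainProd m q D l * St l) * ((chainProd m q E l * S l)ᵀ) := by
    ext i i'
    rw [Matrix.mul_apply, Fintype.sum_sum_type, Matrix.add_apply, Matrix.mul_apply,
      Matrix.sum_apply]
    congr 1
    rw [← Finset.univ_sigma_univ, Finset.sum_sigma]
    refine Finset.sum_congr rfl fun l _ => ?_
    rw [Matrix.mul_apply]
    refine Finset.sum_congr rfl fun j _ => ?_
    simp [skipFrame]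
  have h1 : skipFrame κ m q D St * (skipFrame κ m q E S)ᵀ = 1 := by
    rw [hdecomp, Finset.sum_congr rfl fun l _ => hd2 l]
    exact chain κ le_rfl
  refine ⟨h1, ?_⟩
  intro x i
  have h2 : ∀ a, (∑ c, skipFrame κ m q D St i c * skipFrame κ m q E S a c)
      = (1 : Matrix (Fin (q 0) × ZMod (m 0)) (Fin (q 0) × ZMod (m 0)) ℝ) i a := by
    intro a
    rw [← h1, Matrix.mul_apply]
    exact Finset.sum_congr rfl fun c _ => by rw [Matrix.transpose_apply]
  calc x i = ∑ a, (1 : Matrix (Fin (q 0) × ZMod (m 0)) (Fin (q 0) × ZMod (m 0)) ℝ) i a * x a := by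
        simp [Matrix.one_apply]
    _ = ∑ a, (∑ c, skipFrame κ m q D St i c * skipFrame κ m q E S a c) * x a := by
        simp only [h2]
    _ = ∑ c : SkipIdx κ m q, (∑ a, skipFrame κ m q E S a c * x a) * skipFrame κ m q D St i c := by
        simp only [Finset.sum_mul, Finset.mul_sum]
        rw [Finset.sum_comm]
        refine Finset.sum_congr rfl fun c _ => Finset.sum_congr rfl fun a _ => by ring
end
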